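/- Let $m \geq 2$, let $n_1,\ldots,n_m$ be positive integers with $n_{m+1}=n_1$, and let $j, r$ be non-negative integers with $j \leq m$. Define $S(n_1,\ldots,n_m; r, j, q) = \frac{1}{[n_1]}\binom{n_1+n_m}{n_1}_q^{-1} \sum_{k=1}^{n_1} [2k][k]^{2r} q^{jk^2 - (r+1)k} \prod_{i=1}^m \binom{n_i+n_{i+1}}{n_i+k}_q$ (an element of $\mathbb{Q}(q)$). Then for $j \geq 1$ and $m \geq 3$: $S(n_1,\ldots,n_m; r, j, q) = \sum_{l=1}^{n_1} q^{l^2} \binom{n_1-1}{l-1}_q \binom{n_2+n_3}{n_2-l}_q S(l, n_3, \ldots, n_m; r, j-1, q)$. -/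

import Mathlib

/-!
Write the Gaussian binomials as quotients of `q`-factorials and fix the summation index `k` on
the left. Splitting `q^(j k²) = q^(k²) q^((j-1) k²)`, the `k`-th summand is the weight it shares
with the `k`-th summand of every `S(l, n₃, …, n_m; r, j-1)`, times
`q^(k²) [n₁+n₂, n₁+k] [n₂+n₃, n₂+k] [n_m+n₁, n_m+k]`. Once the `q`-factorials cancel, expanding
this product as a sum over `k ≤ l ≤ n₁` is the `q`-Vandermonde identity
`q^(k²) [a+b, a-k] = ∑_{k ≤ l ≤ a} q^(l²) [a+k, a-l] [b-k, l-k]` with `a = n₁`, `b = n₂`.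
Exchanging the sums over `1 ≤ k ≤ l ≤ n₁` gives the theorem.
-/

open Polynomial Finset

noncomputable def qint (n : ℕ) : Polynomial ℤ := ∑ i ∈ Finset.range n, Polynomial.X ^ i

noncomputable def qbinom : ℕ → ℕ → Polynomial ℤ
  | _, 0 => 1
  | 0, _ + 1 => 0
  | n + 1, k + 1 => qbinom n k + Polynomial.X ^ (k + 1) * qbinom n (k + 1)

/-- `S(n₁,…,n_m; r, j, q)` of the paper, evaluated at `q ∈ ℚ(q)`.  The sequence
`n₁, …, n_m, n_{m+1}` is encoded as `n : ℕ → ℕ` (with the cyclic condition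
`n (m+1) = n 1` imposed as a hypothesis in the theorems). -/
noncomputable def Sfun (q : RatFunc ℚ) (m : ℕ) (n : ℕ → ℕ) (r j : ℕ) : RatFunc ℚ :=
  (Polynomial.aeval q (qint (n 1)))⁻¹ * (Polynomial.aeval q (qbinom (n 1 + n m) (n 1)))⁻¹ *
    ∑ k ∈ Finset.Icc 1 (n 1),
      Polynomial.aeval q (qint (2 * k)) * (Polynomial.aeval q (qint k)) ^ (2 * r) *
        q ^ ((j : ℤ) * (k : ℤ) ^ 2 - ((r : ℤ) + 1) * (k : ℤ)) *
        ∏ i ∈ Finset.Icc 1 m, Polynomial.aeval q (qbinom (n i + n (i + 1)) (n i + k))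

theorem prod_Icc_eq_mul_prod_mul {M : Type*} [CommMonoid M] {a b : ℕ} (h : a < b)
    (f : ℕ → M) :
    ∏ i ∈ Icc a b, f i = f a * (∏ i ∈ Icc (a + 1) (b - 1), f i) * f b := by
  obtain ⟨b, rfl⟩ : ∃ c, b = c + 1 := ⟨b - 1, by omega⟩
  rw [Nat.add_sub_cancel, prod_Icc_succ_top (by omega), ← mul_prod_Ioc_eq_prod_Icc (by omega),
    Icc_add_one_left_eq_Ioc]

theorem prod_Icc_add_one {M : Type*} [CommMonoid M] (a b : ℕ) (f : ℕ → M) :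
    ∏ i ∈ Icc a b, f (i + 1) = ∏ i ∈ Icc (a + 1) (b + 1), f i := by
  rw [← map_add_right_Icc, prod_map]
  rfl

theorem sum_Icc_sum_Icc_comm {α M : Type*} [Preorder α] [LocallyFiniteOrder α] [AddCommMonoid M]
    (a b : α) (f : α → α → M) :
    ∑ k ∈ Icc a b, ∑ l ∈ Icc k b, f k l = ∑ l ∈ Icc a b, ∑ k ∈ Icc a l, f k l :=
  sum_comm' fun k l => by
    simp only [mem_Icc]
    exact ⟨fun ⟨⟨hak, _⟩, hkl, hlb⟩ => ⟨⟨hak, hkl⟩, hak.trans hkl, hlb⟩,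
      fun ⟨⟨hak, hkl⟩, _, hlb⟩ => ⟨⟨hak, hkl.trans hlb⟩, hkl, hlb⟩⟩

theorem sum_mul_sum_Icc_comm {R : Type*} [CommSemiring R] (a : ℕ) (w c v : ℕ → R)
    (u : ℕ → ℕ → R) :
    ∑ k ∈ Icc 1 a, w k * ∑ l ∈ Icc k a, c l * (v l * u l k) =
      ∑ l ∈ Icc 1 a, c l * (v l * ∑ k ∈ Icc 1 l, w k * u l k) := by
  simp only [mul_sum, sum_Icc_sum_Icc_comm]
  exact sum_congr rfl fun l _ => sum_congr rfl fun k _ => by ring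

theorem qbinom_zero_right (n : ℕ) : qbinom n 0 = 1 := by
  cases n <;> rfl

theorem qbinom_succ_succ (n k : ℕ) :
    qbinom (n + 1) (k + 1) = qbinom n k + X ^ (k + 1) * qbinom n (k + 1) := rfl

theorem qbinom_eq_zero_of_lt {n k : ℕ} (h : n < k) : qbinom n k = 0 := by
  induction n generalizing k with
  | zero => obtain ⟨k, rfl⟩ := Nat.exists_eq_succ_of_ne_zero (by omega : k ≠ 0); rfl
  | succ n ih =>
    obtain ⟨k, rfl⟩ := Nat.exists_eq_succ_of_ne_zero (by omega : k ≠ 0)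
    rw [qbinom_succ_succ, ih (by omega), ih (by omega), mul_zero, add_zero]

theorem qbinom_self (n : ℕ) : qbinom n n = 1 := by
  induction n with
  | zero => rfl
  | succ n ih =>
    rw [qbinom_succ_succ, ih, qbinom_eq_zero_of_lt n.lt_succ_self, mul_zero, add_zero]

theorem qint_add (a b : ℕ) : qint (a + b) = qint a + X ^ a * qint b := by
  simp only [qint, sum_range_add, mul_sum, pow_add]

theorem qint_ne_zero {n : ℕ} (hn : 0 < n) : qint n ≠ 0 := fun h => by
  simpa [qint, hn.ne'] using congrArg (eval 1) h

noncomputable def qfact (n : ℕ) : Polynomial ℤ := ∏ i ∈ range n, qint (i + 1)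

theorem qfact_succ (n : ℕ) : qfact (n + 1) = qfact n * qint (n + 1) :=
  prod_range_succ _ n

theorem qfact_mul_qfact_mul_qbinom {k m : ℕ} :
    qfact k * qfact m * qbinom (k + m) k = qfact (k + m) := by
  induction k generalizing m with
  | zero => simp [qbinom_zero_right, qfact]
  | succ k ih =>
    induction m with
    | zero => simp [qbinom_self, qfact]
    | succ m ihm =>
      have hsplit : qint (k + (m + 1) + 1) = qint (k + 1) + X ^ (k + 1) * qint (m + 1) := by
        rw [← qint_add]; congr 1; omega
      have ih' := ih (m := m + 1)
      rw [show k + 1 + m = k + (m + 1) by omega, qfact_succ k] at ihm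
      rw [qfact_succ m] at ih'
      rw [show k + 1 + (m + 1) = k + (m + 1) + 1 by omega, qbinom_succ_succ, qfact_succ,
        qfact_succ (k + (m + 1)), hsplit, qfact_succ m]
      linear_combination qint (k + 1) * ih' + X ^ (k + 1) * qint (m + 1) * ihm

theorem qbinom_add_eq (M N K : ℕ) :
    qbinom (M + N) K =
      ∑ p ∈ antidiagonal K, X ^ ((M - p.1) * p.2) * qbinom M p.1 * qbinom N p.2 := by
  induction M generalizing K with
  | zero =>
    cases K with
    | zero => simp [qbinom_zero_right]
    | succ K => simp [Nat.sum_antidiagonal_succ, qbinom_zero_right, qbinom_eq_zero_of_lt]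
  | succ M ih =>
    cases K with
    | zero => simp [qbinom_zero_right]
    | succ K =>
      -- For `i + j = K` and `i < M`: `(K + 1) + (M - i - 1) j = (M - i) j + (i + 1)`.
      have hterm : ∀ p ∈ antidiagonal K, X ^ (K + 1) * (X ^ ((M - (p.1 + 1)) * p.2) *
          qbinom M (p.1 + 1) * qbinom N p.2) =
          X ^ ((M - p.1) * p.2) * (X ^ (p.1 + 1) * qbinom M (p.1 + 1)) * qbinom N p.2 := by
        rintro ⟨i, j⟩ hij
        rw [HasAntidiagonal.mem_antidiagonal] at hij
        obtain hiM | hMi := lt_or_ge i M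
        · obtain ⟨t, rfl⟩ := Nat.exists_eq_add_of_lt hiM
          rw [show i + t + 1 - (i + 1) = t by omega, show i + t + 1 - i = t + 1 by omega, ← hij]
          ring
        · simp [qbinom_eq_zero_of_lt (show M < i + 1 by omega)]
      rw [show M + 1 + N = M + N + 1 by omega, qbinom_succ_succ, ih, ih, Nat.sum_antidiagonal_succ,
        Nat.sum_antidiagonal_succ, mul_add, mul_sum, sum_congr rfl hterm]
      simp only [Nat.add_sub_add_right, qbinom_succ_succ, qbinom_zero_right, Nat.sub_zero, mul_add,
        add_mul, sum_add_distrib]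
      ring

theorem X_pow_sq_mul_qbinom_eq_sum {a b k : ℕ} (hka : k ≤ a) (hkb : k ≤ b) :
    X ^ (k ^ 2) * qbinom (a + b) (a - k) =
      ∑ l ∈ Icc k a, X ^ (l ^ 2) * qbinom (a + k) (a - l) * qbinom (b - k) (l - k) := by
  rw [show a + b = a + k + (b - k) by omega, qbinom_add_eq, mul_sum]
  refine sum_nbij' (fun p => p.2 + k) (fun l => (a - l, l - k)) ?_ ?_ ?_ ?_ ?_
  · rintro ⟨i, j⟩ h
    simp only [HasAntidiagonal.mem_antidiagonal, mem_Icc] at h ⊢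
    omega
  · intro l h
    simp only [HasAntidiagonal.mem_antidiagonal, mem_Icc] at h ⊢
    omega
  · rintro ⟨i, j⟩ h
    simp only [HasAntidiagonal.mem_antidiagonal] at h
    simp only [Prod.mk.injEq]
    omega
  · intro l h
    simp only [mem_Icc] at h
    omega
  · rintro ⟨i, j⟩ h
    simp only [HasAntidiagonal.mem_antidiagonal] at h
    dsimp only
    rw [show a + k - i = j + 2 * k by omega, show a - (j + k) = i by omega, Nat.add_sub_cancel]
    ring

section Evaluation

-- `[Algebra ℤ K]` is a parameter so that the lemmas apply to `RatFunc ℚ`, whose `ℤ`-algebra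
-- instance is not syntactically `algebraInt`.
variable {K : Type*} [Field K] [Algebra ℤ K] {q : K}

theorem aeval_qfact_ne_zero (hq : ∀ n, 0 < n → aeval q (qint n) ≠ 0) (n : ℕ) :
    aeval q (qfact n) ≠ 0 := by
  rw [qfact, map_prod]
  exact prod_ne_zero_iff.mpr fun i _ => hq _ i.succ_pos

theorem aeval_qbinom_eq_div (hq : ∀ n, 0 < n → aeval q (qint n) ≠ 0) {n k m : ℕ}
    (h : k + m = n) :
    aeval q (qbinom n k) = aeval q (qfact n) / (aeval q (qfact k) * aeval q (qfact m)) := by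
  subst h
  rw [← qfact_mul_qfact_mul_qbinom, map_mul, map_mul]
  field_simp [aeval_qfact_ne_zero hq]

theorem aeval_qint_eq_div (hq : ∀ n, 0 < n → aeval q (qint n) ≠ 0) {n m : ℕ}
    (h : m + 1 = n) :
    aeval q (qint n) = aeval q (qfact n) / aeval q (qfact m) := by
  subst h
  rw [qfact_succ, map_mul]
  field_simp [aeval_qfact_ne_zero hq]

theorem aeval_qbinom_triple_eq_sum (hq : ∀ n, 0 < n → aeval q (qint n) ≠ 0) {a b c d k : ℕ}
    (hk : 1 ≤ k) (hka : k ≤ a) :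
    (aeval q (qint a))⁻¹ * (aeval q (qbinom (a + d) a))⁻¹ * (q ^ (k ^ 2) *
      (aeval q (qbinom (a + b) (a + k)) * aeval q (qbinom (b + c) (b + k)) *
        aeval q (qbinom (d + a) (d + k)))) =
    ∑ l ∈ Icc k a, q ^ (l ^ 2) * aeval q (qbinom (a - 1) (l - 1)) *
      aeval q (qbinom (b + c) (c + l)) *
        ((aeval q (qint l))⁻¹ * (aeval q (qbinom (l + d) l))⁻¹ *
          (aeval q (qbinom (l + c) (l + k)) * aeval q (qbinom (d + l) (d + k)))) := by
  obtain hck | hkc := lt_or_ge c k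
  · rw [qbinom_eq_zero_of_lt (by omega : b + c < b + k), sum_eq_zero fun l hl => ?_]
    · simp
    · rw [mem_Icc] at hl
      simp [qbinom_eq_zero_of_lt (by omega : l + c < l + k)]
  obtain hbk | hkb := lt_or_ge b k
  · rw [qbinom_eq_zero_of_lt (by omega : a + b < a + k), sum_eq_zero fun l hl => ?_]
    · simp
    · rw [mem_Icc] at hl
      simp [qbinom_eq_zero_of_lt (by omega : b + c < c + l)]
  have hf := aeval_qfact_ne_zero hq
  set C := aeval q (qfact (a - 1)) * aeval q (qfact (b + c)) * aeval q (qfact d) /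
    (aeval q (qfact (c - k)) * aeval q (qfact (d + k)) * aeval q (qfact (a + k)) *
      aeval q (qfact (b - k))) with hC
  have hterm : ∀ l ∈ Icc k a, q ^ (l ^ 2) * aeval q (qbinom (a - 1) (l - 1)) *
      aeval q (qbinom (b + c) (c + l)) *
        ((aeval q (qint l))⁻¹ * (aeval q (qbinom (l + d) l))⁻¹ *
          (aeval q (qbinom (l + c) (l + k)) * aeval q (qbinom (d + l) (d + k)))) =
      C * (q ^ (l ^ 2) * aeval q (qbinom (a + k) (a - l)) *
        aeval q (qbinom (b - k) (l - k))) := by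
    intro l hl
    rw [mem_Icc] at hl
    obtain hbl | hlb := lt_or_ge b l
    · simp [qbinom_eq_zero_of_lt (by omega : b + c < c + l),
        qbinom_eq_zero_of_lt (by omega : b - k < l - k)]
    rw [aeval_qbinom_eq_div hq (by omega : l - 1 + (a - l) = a - 1),
      aeval_qbinom_eq_div hq (by omega : c + l + (b - l) = b + c),
      aeval_qint_eq_div hq (by omega : l - 1 + 1 = l),
      aeval_qbinom_eq_div hq (rfl : l + d = l + d),
      aeval_qbinom_eq_div hq (by omega : l + k + (c - k) = l + c),
      aeval_qbinom_eq_div hq (by omega : d + k + (l - k) = d + l),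
      aeval_qbinom_eq_div hq (by omega : a - l + (l + k) = a + k),
      aeval_qbinom_eq_div hq (by omega : l - k + (b - l) = b - k), add_comm c l, add_comm d l,
      hC]
    field_simp [hf]
  have hvdm := congrArg (aeval q) (X_pow_sq_mul_qbinom_eq_sum (a := a) (b := b) hka hkb)
  simp only [map_mul, map_pow, aeval_X, map_sum] at hvdm
  rw [sum_congr rfl hterm, ← mul_sum, ← hvdm,
    aeval_qint_eq_div hq (by omega : a - 1 + 1 = a),
    aeval_qbinom_eq_div hq (rfl : a + d = a + d),
    aeval_qbinom_eq_div hq (by omega : a + k + (b - k) = a + b),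
    aeval_qbinom_eq_div hq (by omega : b + k + (c - k) = b + c),
    aeval_qbinom_eq_div hq (by omega : d + k + (a - k) = d + a),
    aeval_qbinom_eq_div hq (by omega : a - k + (b + k) = a + b), add_comm d a, hC]
  field_simp [hf]

end Evaluation

theorem transcendental_int_ratFunc_X : Transcendental ℤ (RatFunc.X : RatFunc ℚ) := by
  rw [← RatFunc.algebraMap_X, transcendental_algebraMap_iff (RatFunc.algebraMap_injective ℚ)]
  exact (Polynomial.transcendental_X ℚ).restrictScalars (algebraMap ℤ ℚ).injective_int

theorem aeval_X_qint_ne_zero (n : ℕ) (hn : 0 < n) :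
    aeval (RatFunc.X : RatFunc ℚ) (qint n) ≠ 0 :=
  fun h => qint_ne_zero hn (transcendental_iff.mp transcendental_int_ratFunc_X _ h)

-- The factors of the `k`-th summand of `Sfun` shared by both sides of the recursion.
noncomputable def Sweight (q : RatFunc ℚ) (p : ℕ) (n : ℕ → ℕ) (r j k : ℕ) : RatFunc ℚ :=
  aeval q (qint (2 * k)) * aeval q (qint k) ^ (2 * r) *
    q ^ ((j : ℤ) * (k : ℤ) ^ 2 - ((r : ℤ) + 1) * (k : ℤ)) *
    ∏ i ∈ Icc 3 (p + 2), aeval q (qbinom (n i + n (i + 1)) (n i + k))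

theorem Sweight_succ {q : RatFunc ℚ} (hq : q ≠ 0) (p : ℕ) (n : ℕ → ℕ) (r j k : ℕ) :
    Sweight q p n r (j + 1) k = q ^ (k ^ 2) * Sweight q p n r j k := by
  have hpow : q ^ (((j + 1 : ℕ) : ℤ) * (k : ℤ) ^ 2 - ((r : ℤ) + 1) * (k : ℤ)) =
      q ^ (k ^ 2) * q ^ ((j : ℤ) * (k : ℤ) ^ 2 - ((r : ℤ) + 1) * (k : ℤ)) := by
    rw [← zpow_natCast, ← zpow_add₀ hq]
    congr 1
    push_cast
    ring
  rw [Sweight, Sweight, hpow]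
  ring

theorem Sfun_eq_of_cyclic (q : RatFunc ℚ) (p : ℕ) (n : ℕ → ℕ) (hcyc : n (p + 3 + 1) = n 1)
    (r j : ℕ) :
    Sfun q (p + 3) n r j =
      (aeval q (qint (n 1)))⁻¹ * (aeval q (qbinom (n 1 + n (p + 3)) (n 1)))⁻¹ *
        ∑ k ∈ Icc 1 (n 1), Sweight q p n r j k * (aeval q (qbinom (n 1 + n 2) (n 1 + k)) *
          aeval q (qbinom (n 2 + n 3) (n 2 + k)) *
          aeval q (qbinom (n (p + 3) + n 1) (n (p + 3) + k))) := by
  rw [Sfun]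
  congr 1
  refine sum_congr rfl fun k _ => ?_
  rw [prod_Icc_eq_mul_prod_mul (by omega), show p + 3 - 1 = p + 2 from rfl,
    ← mul_prod_Ioc_eq_prod_Icc (by omega), ← Icc_add_one_left_eq_Ioc, hcyc, Sweight]
  simp only [Nat.reduceAdd]
  ring

theorem Sfun_contract (q : RatFunc ℚ) (p : ℕ) (n : ℕ → ℕ) (l r j : ℕ) :
    Sfun q (p + 2) (fun i => if i = 1 ∨ i = p + 3 then l else n (i + 1)) r j =
      (aeval q (qint l))⁻¹ * (aeval q (qbinom (l + n (p + 3)) l))⁻¹ *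
      ∑ k ∈ Icc 1 l, Sweight q p n r j k * (aeval q (qbinom (l + n 3) (l + k)) *
        aeval q (qbinom (n (p + 3) + l) (n (p + 3) + k))) := by
  set n' : ℕ → ℕ := fun i => if i = 1 ∨ i = p + 3 then l else n (i + 1)
  have hfirst : n' 1 = l := if_pos (Or.inl rfl)
  have hlast : n' (p + 2 + 1) = l := if_pos (Or.inr rfl)
  have hmid : ∀ i, 2 ≤ i → i ≤ p + 2 → n' i = n (i + 1) := fun _ _ _ => if_neg (by omega)
  have hprod : ∀ k, ∏ i ∈ Icc 2 (p + 1), aeval q (qbinom (n' i + n' (i + 1)) (n' i + k)) =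
      ∏ i ∈ Icc 3 (p + 2), aeval q (qbinom (n i + n (i + 1)) (n i + k)) := by
    intro k
    refine (prod_congr rfl fun i hi => ?_).trans (prod_Icc_add_one 2 (p + 1) _)
    rw [mem_Icc] at hi
    rw [hmid i (by omega) (by omega), hmid (i + 1) (by omega) (by omega)]
  rw [Sfun, hfirst, hmid (p + 2) (by omega) le_rfl]
  congr 1
  refine sum_congr rfl fun k _ => ?_
  rw [prod_Icc_eq_mul_prod_mul (by omega), show p + 2 - 1 = p + 1 from rfl, hprod, hfirst,
    hlast, hmid 2 le_rfl (by omega), hmid (p + 2) (by omega) le_rfl, Sweight]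
  ring

theorem stmt_14_general (m : ℕ) (hm : 3 ≤ m) (n : ℕ → ℕ)
    (hcyc : n (m + 1) = n 1)
    (r j : ℕ) (hj1 : 1 ≤ j) :
    Sfun (RatFunc.X : RatFunc ℚ) m n r j
      = ∑ l ∈ Finset.Icc 1 (n 1),
          (RatFunc.X : RatFunc ℚ) ^ (l ^ 2) *
            Polynomial.aeval (RatFunc.X : RatFunc ℚ) (qbinom (n 1 - 1) (l - 1)) *
            Polynomial.aeval (RatFunc.X : RatFunc ℚ) (qbinom (n 2 + n 3) (n 3 + l)) *
            Sfun (RatFunc.X : RatFunc ℚ) (m - 1)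
              (fun i => if i = 1 ∨ i = m then l else n (i + 1)) r (j - 1) := by
  obtain ⟨p, rfl⟩ : ∃ p, m = p + 3 := ⟨m - 3, by omega⟩
  obtain ⟨j, rfl⟩ : ∃ i, j = i + 1 := ⟨j - 1, by omega⟩
  rw [Sfun_eq_of_cyclic _ p n hcyc, show p + 3 - 1 = p + 2 from rfl, Nat.add_sub_cancel]
  simp only [Sfun_contract, Sweight_succ RatFunc.X_ne_zero]
  rw [← sum_mul_sum_Icc_comm, mul_sum]
  refine sum_congr rfl fun k hk => ?_
  rw [mem_Icc] at hk
  rw [← aeval_qbinom_triple_eq_sum aeval_X_qint_ne_zero hk.1 hk.2]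
  ring

theorem stmt_14 (m : ℕ) (hm : 3 ≤ m) (n : ℕ → ℕ)
    (hpos : ∀ i ∈ Finset.Icc 1 m, 0 < n i) (hcyc : n (m + 1) = n 1)
    (r j : ℕ) (hj1 : 1 ≤ j) (hjm : j ≤ m) :
    Sfun (RatFunc.X : RatFunc ℚ) m n r j
      = ∑ l ∈ Finset.Icc 1 (n 1),
          (RatFunc.X : RatFunc ℚ) ^ (l ^ 2) *
            Polynomial.aeval (RatFunc.X : RatFunc ℚ) (qbinom (n 1 - 1) (l - 1)) *
            Polynomial.aeval (RatFunc.X : RatFunc ℚ) (qbinom (n 2 + n 3) (n 3 + l)) *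
            Sfun (RatFunc.X : RatFunc ℚ) (m - 1)
              (fun i => if i = 1 ∨ i = m then l else n (i + 1)) r (j - 1) :=
  stmt_14_general m hm n hcyc r j hj1
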